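/- arXiv:1309.1659 — 2 statements merged into one kernel-verified Lean document; each statement's English description precedes it below -/
import Mathlib

section
/- Let H be a Hopf algebra with invertible antipode, and in H_par define ε_h = [h₍₁₎][S(h₍₂₎)] and ε̃_h = [S(h₍₁₎)][h₍₂₎]. Then for all h,k ∈ H: (a) ε_k[h] = [h₍₂₎]ε_{S⁻¹(h₍₁₎)k}; (b) [h]ε_k = ε_{h₍₁₎k}[h₍₂₎]; (c) ε_{h₍₁₎}ε_{h₍₂₎} = ε_h; (f) ε̃_{h₍₁₎}ε̃_{h₍₂₎} = ε̃_h; (g) ε̃_hε_k = ε_kε̃_h. -/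
open TensorProduct BigOperators HopfAlgebra

variable (k : Type) [CommRing k] (H : Type) [Ring H] [HopfAlgebra k H]

/-- `sw f g : H → T(H)` is the Sweedler convolution `x ↦ ∑ f(x₍₁₎) * g(x₍₂₎)`. -/
noncomputable def sw (f g : H →ₗ[k] TensorAlgebra k H) : H →ₗ[k] TensorAlgebra k H :=
  (LinearMap.mul' k (TensorAlgebra k H)) ∘ₗ (TensorProduct.map f g) ∘ₗ
    (Coalgebra.comul (R := k))

/-- The defining relations of the universal partial "Hopf" algebra `H_par`,
imposed on the tensor algebra `T(H)`. -/
inductive HparRel : TensorAlgebra k H → TensorAlgebra k H → Prop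
  | one : HparRel (TensorAlgebra.ι k (1 : H)) 1
  | pr2 (h x : H) : HparRel
      (TensorAlgebra.ι k h *
        sw k H (TensorAlgebra.ι k) ((TensorAlgebra.ι k) ∘ₗ antipode (R := k)) x)
      (sw k H ((TensorAlgebra.ι k) ∘ₗ LinearMap.mulLeft k h)
        ((TensorAlgebra.ι k) ∘ₗ antipode (R := k)) x)
  | pr3 (h x : H) : HparRel
      (sw k H (TensorAlgebra.ι k) ((TensorAlgebra.ι k) ∘ₗ antipode (R := k)) h *
        TensorAlgebra.ι k x)
      (sw k H (TensorAlgebra.ι k)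
        ((TensorAlgebra.ι k) ∘ₗ (LinearMap.mulRight k x) ∘ₗ antipode (R := k)) h)
  | pr4 (h x : H) : HparRel
      (TensorAlgebra.ι k h *
        sw k H ((TensorAlgebra.ι k) ∘ₗ antipode (R := k)) (TensorAlgebra.ι k) x)
      (sw k H ((TensorAlgebra.ι k) ∘ₗ (LinearMap.mulLeft k h) ∘ₗ antipode (R := k))
        (TensorAlgebra.ι k) x)
  | pr5 (h x : H) : HparRel
      (sw k H ((TensorAlgebra.ι k) ∘ₗ antipode (R := k)) (TensorAlgebra.ι k) h *
        TensorAlgebra.ι k x)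
      (sw k H ((TensorAlgebra.ι k) ∘ₗ antipode (R := k))
        ((TensorAlgebra.ι k) ∘ₗ LinearMap.mulRight k x) h)

/-- The universal partial "Hopf" algebra `H_par` of a Hopf algebra `H`. -/
abbrev Hpar : Type := RingQuot (HparRel k H)

/-- The canonical (universal) partial representation `h ↦ [h]` of `H` on `H_par`. -/
noncomputable def bracket : H →ₗ[k] Hpar k H :=
  (RingQuot.mkAlgHom k (HparRel k H)).toLinearMap ∘ₗ TensorAlgebra.ι k

/-- `ε_h = [h₍₁₎][S(h₍₂₎)]` in `H_par`. -/
noncomputable def epsilonPar : H →ₗ[k] Hpar k H :=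
  (LinearMap.mul' k (Hpar k H)) ∘ₗ
    (TensorProduct.map (bracket k H) ((bracket k H) ∘ₗ antipode (R := k))) ∘ₗ
    (Coalgebra.comul (R := k))

/-- `ε̃_h = [S(h₍₁₎)][h₍₂₎]` in `H_par`. -/
noncomputable def epsilonTildePar : H →ₗ[k] Hpar k H :=
  (LinearMap.mul' k (Hpar k H)) ∘ₗ
    (TensorProduct.map ((bracket k H) ∘ₗ antipode (R := k)) (bracket k H)) ∘ₗ
    (Coalgebra.comul (R := k))

/-!
Every identity is obtained by expanding both sides with the defining relations
`[h] ε_x = [h x₁][S x₂]`, `ε_h [x] = [h₁][S(h₂) x]` and `ε̃_h [x] = [S h₁][h₂ x]`, after which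
coassociativity brings a factor `S(y₁) y₂`, `y₁ S(y₂)` or `y₂ S⁻¹(y₁)` inside a single bracket,
where it collapses to `ε(y)`. For (c) and (f) this is done once, as `ε_{h₁}[h₂] = [h]` and
`ε̃_{h₁}[S h₂] = [S h]`; idempotency of `ε` and `ε̃` for the convolution product then follows
from its associativity. Identity (a), and (g) which combines (a) with (b), need the comultiplication
of `S` and `S⁻¹`: `Δ ∘ S` and `(S ⊗ S) ∘ Δᵒᵖ` are both convolution inverses of `Δ`.
-/

open Coalgebra WithConv

namespace Coalgebra

variable {R C M : Type*} [CommSemiring R] [AddCommMonoid C] [Module R C] [Coalgebra R C]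
  [AddCommMonoid M] [Module R M] {ι κ Λ : Type*} {a : C}

theorem sum_sum_apply_tmul_tmul_eq (Φ : C ⊗[R] (C ⊗[R] C) →ₗ[R] M) (r : Repr R a ι)
    (r₁ : ∀ i, Repr R (r.left i) κ) (r₂ : ∀ i, Repr R (r.right i) Λ) :
    ∑ i ∈ r.index, ∑ j ∈ (r₁ i).index, Φ ((r₁ i).left j ⊗ₜ ((r₁ i).right j ⊗ₜ r.right i)) =
      ∑ i ∈ r.index, ∑ j ∈ (r₂ i).index, Φ (r.left i ⊗ₜ ((r₂ i).left j ⊗ₜ (r₂ i).right j)) := by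
  simpa only [map_sum] using congrArg Φ (sum_tmul_tmul_eq r r₁ r₂)

theorem sum_tmul_counit_smul_eq (r : Repr R a ι) (e : M) :
    ∑ i ∈ r.index, r.left i ⊗ₜ[R] (counit (R := R) (r.right i) • e) = a ⊗ₜ e := by
  have := congrArg (LinearMap.lTensor C (LinearMap.toSpanSingleton R M e)) (sum_tmul_counit_eq r)
  simpa only [map_sum, LinearMap.lTensor_tmul, LinearMap.toSpanSingleton_apply, one_smul]
    using this

theorem sum_counit_smul_tmul_eq (r : Repr R a ι) (e : M) :
    ∑ i ∈ r.index, (counit (R := R) (r.left i) • e) ⊗ₜ[R] r.right i = e ⊗ₜ a := by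
  have := congrArg (LinearMap.rTensor C (LinearMap.toSpanSingleton R M e)) (sum_counit_tmul_eq r)
  simpa only [map_sum, LinearMap.rTensor_tmul, LinearMap.toSpanSingleton_apply, one_smul]
    using this

theorem sum_sum_tmul_apply_eq_tmul {m : C ⊗[R] C →ₗ[R] M} {e : M}
    (hm : ∀ c, m (comul c) = counit (R := R) c • e) (r : Repr R a ι)
    (r₁ : ∀ i, Repr R (r.left i) κ) :
    ∑ i ∈ r.index, ∑ j ∈ (r₁ i).index, (r₁ i).left j ⊗ₜ[R] m ((r₁ i).right j ⊗ₜ r.right i) =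
      a ⊗ₜ e := by
  have h := sum_sum_apply_tmul_tmul_eq (m.lTensor C) r r₁ fun i => ℛ R (r.right i)
  simp only [LinearMap.lTensor_tmul, ← tmul_sum, ← map_sum, Repr.eq, hm] at h
  rw [h, sum_tmul_counit_smul_eq]

theorem sum_sum_apply_tmul_eq_tmul {m : C ⊗[R] C →ₗ[R] M} {e : M}
    (hm : ∀ c, m (comul c) = counit (R := R) c • e) (r : Repr R a ι)
    (r₂ : ∀ i, Repr R (r.right i) Λ) :
    ∑ i ∈ r.index, ∑ j ∈ (r₂ i).index, m (r.left i ⊗ₜ (r₂ i).left j) ⊗ₜ[R] (r₂ i).right j =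
      e ⊗ₜ a := by
  have h := sum_sum_apply_tmul_tmul_eq
    (m.rTensor C ∘ₗ (_root_.TensorProduct.assoc R C C C).symm.toLinearMap)
    r (fun i => ℛ R (r.left i)) r₂
  simp only [LinearMap.comp_apply, LinearEquiv.coe_coe, assoc_symm_tmul, LinearMap.rTensor_tmul,
    ← sum_tmul, ← map_sum, Repr.eq, hm] at h
  rw [← h, sum_counit_smul_tmul_eq]

@[simps]
noncomputable def Repr.antiInduced {D : Type*} [AddCommMonoid D] [Module R D]
    [CoalgebraStruct R D] (r : Repr R a ι) (f : C →ₗ[R] D)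
    (hf : ∀ c, comul (f c) = map f f (TensorProduct.comm R C C (comul c))) :
    Repr R (f a) ι where
  index := r.index
  left := f ∘ r.right
  right := f ∘ r.left
  eq := by simp [hf, ← r.eq]

end Coalgebra

namespace HopfAlgebra

variable {R A : Type*} [CommSemiring R] [Semiring A] [HopfAlgebra R A]

theorem mul'_antipode_rTensor_comul (a : A) :
    (LinearMap.mul' R A ∘ₗ (antipode R).rTensor A) (comul a) = counit (R := R) a • (1 : A) := by
  rw [LinearMap.comp_apply, mul_antipode_rTensor_comul_apply, Algebra.algebraMap_eq_smul_one]

theorem mul'_antipode_lTensor_comul (a : A) :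
    (LinearMap.mul' R A ∘ₗ (antipode R).lTensor A) (comul a) = counit (R := R) a • (1 : A) := by
  rw [LinearMap.comp_apply, mul_antipode_lTensor_comul_apply, Algebra.algebraMap_eq_smul_one]

/-- In Sweedler notation: `S(c₂) c₃ ⊗ S(c₁) c₄ = 1 ⊗ S(c₁) c₂ = ε(c) (1 ⊗ 1)`. -/
theorem _root_.LinearMap.comul_left_inv :
    toConv (map (antipode R) (antipode R) ∘ₗ (TensorProduct.comm R A A).toLinearMap ∘ₗ comul) *
      toConv (comul (R := R) (A := A)) = 1 := by
  ext c
  set r := ℛ R c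
  set Φ : A ⊗[R] (A ⊗[R] A) →ₗ[R] A ⊗[R] A :=
    LinearMap.mul' R (A ⊗[R] A) ∘ₗ
      map (map (antipode R) (antipode R) ∘ₗ (TensorProduct.comm R A A).toLinearMap) comul ∘ₗ
      (_root_.TensorProduct.assoc R A A A).symm.toLinearMap
  have hΦ (u v w : A) : Φ (u ⊗ₜ (v ⊗ₜ w)) = (antipode R v ⊗ₜ antipode R u) * comul w := by
    simp [Φ]
  have collapse (i) : ∑ j ∈ (ℛ R (r.right i)).index,
      Φ (r.left i ⊗ₜ ((ℛ R (r.right i)).left j ⊗ₜ (ℛ R (r.right i)).right j)) =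
        1 ⊗ₜ (antipode R (r.left i) * r.right i) := by
    have h := congrArg (LinearMap.lTensor A (LinearMap.mulLeft R (antipode R (r.left i))))
      (sum_sum_apply_tmul_eq_tmul (m := LinearMap.mul' R A ∘ₗ (antipode R).rTensor A)
        mul'_antipode_rTensor_comul (ℛ R (r.right i)) fun j => ℛ R ((ℛ R (r.right i)).right j))
    simp only [map_sum, LinearMap.lTensor_tmul, LinearMap.mulLeft_apply, LinearMap.comp_apply,
      LinearMap.rTensor_tmul, LinearMap.mul'_apply] at h
    rw [← h]
    refine Finset.sum_congr rfl fun j _ => ?_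
    rw [hΦ, ← (ℛ R ((ℛ R (r.right i)).right j)).eq, Finset.mul_sum]
    simp
  calc _ = ∑ i ∈ r.index, ∑ j ∈ (ℛ R (r.left i)).index,
          Φ ((ℛ R (r.left i)).left j ⊗ₜ ((ℛ R (r.left i)).right j ⊗ₜ r.right i)) := by
        rw [r.convMul_apply]
        refine Finset.sum_congr rfl fun i _ => ?_
        simp [hΦ, ← (ℛ R (r.left i)).eq, Finset.sum_mul]
    _ = ∑ i ∈ r.index, 1 ⊗ₜ (antipode R (r.left i) * r.right i) := by
        rw [sum_sum_apply_tmul_tmul_eq Φ r _ fun i => ℛ R (r.right i)]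
        exact Finset.sum_congr rfl fun i _ => collapse i
    _ = _ := by
        rw [← tmul_sum, sum_antipode_mul_eq_algebraMap_counit]
        simp [Algebra.algebraMap_eq_smul_one, Algebra.TensorProduct.one_def]

theorem comul_antipode (a : A) :
    comul (antipode R a) = map (antipode R) (antipode R) (TensorProduct.comm R A A (comul a)) := by
  have h := left_inv_eq_right_inv (M := WithConv (A →ₗ[R] A ⊗[R] A)) LinearMap.comul_left_inv
    LinearMap.comul_right_inv
  exact congr($h a).symm

theorem comul_of_antipode_inverse {Sinv : A →ₗ[R] A} (hSinv₁ : ∀ a, Sinv (antipode R a) = a)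
    (hSinv₂ : ∀ a, antipode R (Sinv a) = a) (a : A) :
    comul (Sinv a) = map Sinv Sinv (TensorProduct.comm R A A (comul a)) := by
  conv_rhs => rw [← hSinv₂ a, comul_antipode]
  induction comul (R := R) (Sinv a) using TensorProduct.induction_on with
  | zero => simp
  | tmul x y => simp [hSinv₁]
  | add x y hx hy => simp only [map_add, ← hx, ← hy]

theorem mul'_comm_rTensor_comul_of_antipode_inverse {Sinv : A →ₗ[R] A}
    (hSinv₁ : ∀ a, Sinv (antipode R a) = a) (hSinv₂ : ∀ a, antipode R (Sinv a) = a) (a : A) :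
    (LinearMap.mul' R A ∘ₗ (TensorProduct.comm R A A).toLinearMap ∘ₗ Sinv.rTensor A) (comul a) =
      counit (R := R) a • (1 : A) := by
  have h := sum_antipode_mul_eq_smul
    ((ℛ R a).antiInduced Sinv (comul_of_antipode_inverse hSinv₁ hSinv₂))
  simp only [Repr.antiInduced_index, Repr.antiInduced_left, Repr.antiInduced_right,
    Function.comp_apply, hSinv₂] at h
  rw [← counit_antipode, hSinv₂] at h
  simpa [← (ℛ R a).eq] using h

end HopfAlgebra

section Hpar

variable {k H} {ι : Type*}

theorem bracket_one : bracket k H 1 = 1 :=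
  (RingQuot.mkAlgHom_rel k HparRel.one).trans (map_one _)

theorem mkAlgHom_sw_eq_sum (f g : H →ₗ[k] TensorAlgebra k H) {x : H} (r : Repr k x ι) :
    RingQuot.mkAlgHom k (HparRel k H) (sw k H f g x) = ∑ i ∈ r.index,
      RingQuot.mkAlgHom k (HparRel k H) (f (r.left i)) *
        RingQuot.mkAlgHom k (HparRel k H) (g (r.right i)) := by
  simp [sw, ← r.eq]

theorem epsilonPar_eq_sum {x : H} (r : Repr k x ι) :
    epsilonPar k H x =
      ∑ i ∈ r.index, bracket k H (r.left i) * bracket k H (antipode k (r.right i)) :=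
  r.convMul_apply (toConv (bracket k H)) (toConv (bracket k H ∘ₗ antipode k))

theorem epsilonTildePar_eq_sum {x : H} (r : Repr k x ι) :
    epsilonTildePar k H x =
      ∑ i ∈ r.index, bracket k H (antipode k (r.left i)) * bracket k H (r.right i) :=
  r.convMul_apply (toConv (bracket k H ∘ₗ antipode k)) (toConv (bracket k H))

theorem bracket_mul_epsilonPar (h : H) {x : H} (r : Repr k x ι) :
    bracket k H h * epsilonPar k H x =
      ∑ i ∈ r.index, bracket k H (h * r.left i) * bracket k H (antipode k (r.right i)) := by
  have rel := RingQuot.mkAlgHom_rel k (HparRel.pr2 (k := k) h x)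
  rw [map_mul, mkAlgHom_sw_eq_sum _ _ r, mkAlgHom_sw_eq_sum _ _ r] at rel
  rw [epsilonPar_eq_sum r]
  exact rel

theorem epsilonPar_mul_bracket {h : H} (r : Repr k h ι) (x : H) :
    epsilonPar k H h * bracket k H x =
      ∑ i ∈ r.index, bracket k H (r.left i) * bracket k H (antipode k (r.right i) * x) := by
  have rel := RingQuot.mkAlgHom_rel k (HparRel.pr3 (k := k) h x)
  rw [map_mul, mkAlgHom_sw_eq_sum _ _ r, mkAlgHom_sw_eq_sum _ _ r] at rel
  rw [epsilonPar_eq_sum r]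
  exact rel

theorem epsilonTildePar_mul_bracket {h : H} (r : Repr k h ι) (x : H) :
    epsilonTildePar k H h * bracket k H x =
      ∑ i ∈ r.index, bracket k H (antipode k (r.left i)) * bracket k H (r.right i * x) := by
  have rel := RingQuot.mkAlgHom_rel k (HparRel.pr5 (k := k) h x)
  rw [map_mul, mkAlgHom_sw_eq_sum _ _ r, mkAlgHom_sw_eq_sum _ _ r] at rel
  rw [epsilonTildePar_eq_sum r]
  exact rel

theorem toConv_epsilonPar_mul_toConv_bracket :
    toConv (epsilonPar k H) * toConv (bracket k H) = toConv (bracket k H) := by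
  ext h
  set r := ℛ k h
  have collapse := congrArg (LinearMap.mul' k (Hpar k H) ∘ₗ map (bracket k H) (bracket k H))
    (sum_sum_tmul_apply_eq_tmul (m := LinearMap.mul' k H ∘ₗ (antipode k).rTensor H)
      mul'_antipode_rTensor_comul r fun i => ℛ k (r.left i))
  simp only [map_sum, LinearMap.comp_apply, map_tmul, LinearMap.rTensor_tmul,
    LinearMap.mul'_apply, bracket_one, mul_one] at collapse
  rw [r.convMul_apply]
  exact (Finset.sum_congr rfl fun i _ => epsilonPar_mul_bracket _ _).trans collapse

theorem toConv_epsilonTildePar_mul_toConv_bracket_comp_antipode :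
    toConv (epsilonTildePar k H) * toConv (bracket k H ∘ₗ antipode k) =
      toConv (bracket k H ∘ₗ antipode k) := by
  ext h
  set r := ℛ k h
  have collapse := congrArg
    (LinearMap.mul' k (Hpar k H) ∘ₗ map (bracket k H ∘ₗ antipode k) (bracket k H))
    (sum_sum_tmul_apply_eq_tmul (m := LinearMap.mul' k H ∘ₗ (antipode k).lTensor H)
      mul'_antipode_lTensor_comul r fun i => ℛ k (r.left i))
  simp only [map_sum, LinearMap.comp_apply, map_tmul, LinearMap.lTensor_tmul,
    LinearMap.mul'_apply, bracket_one, mul_one] at collapse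
  rw [r.convMul_apply]
  exact (Finset.sum_congr rfl fun i _ => epsilonTildePar_mul_bracket _ _).trans collapse

theorem isIdempotentElem_toConv_epsilonPar : IsIdempotentElem (toConv (epsilonPar k H)) :=
  calc toConv (epsilonPar k H) * toConv (epsilonPar k H)
      = toConv (epsilonPar k H) * (toConv (bracket k H) * toConv (bracket k H ∘ₗ antipode k)) :=
        rfl
    _ = toConv (bracket k H) * toConv (bracket k H ∘ₗ antipode k) := by
        rw [← mul_assoc, toConv_epsilonPar_mul_toConv_bracket]
    _ = toConv (epsilonPar k H) := rfl

theorem isIdempotentElem_toConv_epsilonTildePar :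
    IsIdempotentElem (toConv (epsilonTildePar k H)) :=
  calc toConv (epsilonTildePar k H) * toConv (epsilonTildePar k H)
      = toConv (epsilonTildePar k H) *
          (toConv (bracket k H ∘ₗ antipode k) * toConv (bracket k H)) := rfl
    _ = toConv (bracket k H ∘ₗ antipode k) * toConv (bracket k H) := by
        rw [← mul_assoc, toConv_epsilonTildePar_mul_toConv_bracket_comp_antipode]
    _ = toConv (epsilonTildePar k H) := rfl

theorem bracket_mul_epsilonPar_eq_sum {h : H} (r : Repr k h ι) (x : H) :
    bracket k H h * epsilonPar k H x =
      ∑ i ∈ r.index, epsilonPar k H (r.left i * x) * bracket k H (r.right i) := by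
  set rx := ℛ k x
  -- Both sides equal `G (h ⊗ 1)`; the right side is `[h₁ x₁][S(x₂) S(h₂) h₃]`.
  set G : H ⊗[k] H →ₗ[k] Hpar k H := ∑ l ∈ rx.index, LinearMap.mul' k (Hpar k H) ∘ₗ
    map (bracket k H ∘ₗ LinearMap.mulRight k (rx.left l))
      (bracket k H ∘ₗ LinearMap.mulLeft k (antipode k (rx.right l)))
  have hG (u v : H) : G (u ⊗ₜ v) = ∑ l ∈ rx.index,
      bracket k H (u * rx.left l) * bracket k H (antipode k (rx.right l) * v) := by
    simp [G]
  have collapse := congrArg G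
    (sum_sum_tmul_apply_eq_tmul (m := LinearMap.mul' k H ∘ₗ (antipode k).rTensor H)
      mul'_antipode_rTensor_comul r fun i => ℛ k (r.left i))
  simp only [map_sum, hG, LinearMap.comp_apply, LinearMap.rTensor_tmul, LinearMap.mul'_apply,
    mul_one] at collapse
  rw [bracket_mul_epsilonPar h rx, ← collapse]
  refine Finset.sum_congr rfl fun i _ => ?_
  simp only [epsilonPar_mul_bracket ((ℛ k (r.left i)).mul rx), Repr.mul_index, Repr.mul_left,
    Repr.mul_right, Finset.sum_product, antipode_mul_antidistrib, mul_assoc]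

theorem epsilonPar_mul_bracket_eq_sum {Sinv : H →ₗ[k] H}
    (hSinv₁ : ∀ a, Sinv (antipode k a) = a) (hSinv₂ : ∀ a, antipode k (Sinv a) = a) (x : H)
    {h : H} (r : Repr k h ι) :
    epsilonPar k H x * bracket k H h =
      ∑ i ∈ r.index, bracket k H (r.right i) * epsilonPar k H (Sinv (r.left i) * x) := by
  set rx := ℛ k x
  -- Both sides equal `G (h ⊗ 1)`; the right side is `[h₃ S⁻¹(h₂) x₁][S(x₂) h₁]`.
  set G : H ⊗[k] H →ₗ[k] Hpar k H := ∑ l ∈ rx.index, LinearMap.mul' k (Hpar k H) ∘ₗ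
    map (bracket k H ∘ₗ LinearMap.mulRight k (rx.left l))
      (bracket k H ∘ₗ LinearMap.mulLeft k (antipode k (rx.right l))) ∘ₗ
    (TensorProduct.comm k H H).toLinearMap
  have hG (u v : H) : G (u ⊗ₜ v) = ∑ l ∈ rx.index,
      bracket k H (v * rx.left l) * bracket k H (antipode k (rx.right l) * u) := by
    simp [G]
  have collapse := congrArg G
    (sum_sum_tmul_apply_eq_tmul
      (m := LinearMap.mul' k H ∘ₗ (TensorProduct.comm k H H).toLinearMap ∘ₗ Sinv.rTensor H)
      (mul'_comm_rTensor_comul_of_antipode_inverse hSinv₁ hSinv₂) r fun i => ℛ k (r.left i))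
  simp only [map_sum, hG, LinearMap.comp_apply, LinearMap.rTensor_tmul, LinearEquiv.coe_coe,
    comm_tmul, LinearMap.mul'_apply, one_mul] at collapse
  rw [epsilonPar_mul_bracket rx h, ← collapse]
  refine Finset.sum_congr rfl fun i _ => ?_
  simp only [bracket_mul_epsilonPar _
      (((ℛ k (r.left i)).antiInduced Sinv (comul_of_antipode_inverse hSinv₁ hSinv₂)).mul rx),
    Repr.mul_index, Repr.mul_left, Repr.mul_right, Repr.antiInduced_index, Repr.antiInduced_left,
    Repr.antiInduced_right, Function.comp_apply, Finset.sum_product, antipode_mul_antidistrib,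
    hSinv₂, mul_assoc]

theorem commute_epsilonTildePar_epsilonPar {Sinv : H →ₗ[k] H}
    (hSinv₁ : ∀ a, Sinv (antipode k a) = a) (hSinv₂ : ∀ a, antipode k (Sinv a) = a) (h x : H) :
    Commute (epsilonTildePar k H h) (epsilonPar k H x) := by
  set r := ℛ k h
  -- By (b), resp. (a) applied to `[S h₁]`, both sides are `[S h₁] ε_{h₂ x} [h₃]`.
  set Φ : H ⊗[k] (H ⊗[k] H) →ₗ[k] Hpar k H := LinearMap.mul' k (Hpar k H) ∘ₗ
    map (bracket k H ∘ₗ antipode k)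
      (LinearMap.mul' k (Hpar k H) ∘ₗ map (epsilonPar k H ∘ₗ LinearMap.mulRight k x) (bracket k H))
  have hΦ (u v w : H) : Φ (u ⊗ₜ (v ⊗ₜ w)) =
      bracket k H (antipode k u) * (epsilonPar k H (v * x) * bracket k H w) := by
    simp [Φ]
  calc epsilonTildePar k H h * epsilonPar k H x
      = ∑ i ∈ r.index, ∑ j ∈ (ℛ k (r.right i)).index,
          Φ (r.left i ⊗ₜ ((ℛ k (r.right i)).left j ⊗ₜ (ℛ k (r.right i)).right j)) := by
        rw [epsilonTildePar_eq_sum r, Finset.sum_mul]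
        refine Finset.sum_congr rfl fun i _ => ?_
        rw [mul_assoc, bracket_mul_epsilonPar_eq_sum (ℛ k (r.right i)), Finset.mul_sum]
        simp only [hΦ]
    _ = ∑ i ∈ r.index, ∑ j ∈ (ℛ k (r.left i)).index,
          Φ ((ℛ k (r.left i)).left j ⊗ₜ ((ℛ k (r.left i)).right j ⊗ₜ r.right i)) :=
        (sum_sum_apply_tmul_tmul_eq Φ r _ _).symm
    _ = epsilonPar k H x * epsilonTildePar k H h := by
        rw [epsilonTildePar_eq_sum r, Finset.mul_sum]
        refine Finset.sum_congr rfl fun i _ => ?_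
        rw [← mul_assoc, epsilonPar_mul_bracket_eq_sum hSinv₁ hSinv₂ x
          ((ℛ k (r.left i)).antiInduced (antipode k) comul_antipode), Finset.sum_mul]
        simp [hΦ, hSinv₁, mul_assoc]

end Hpar

/-- For a Hopf algebra `H` with invertible antipode (with inverse `Sinv`),
the elements `ε_h = [h₍₁₎][S(h₍₂₎)]` and `ε̃_h = [S(h₍₁₎)][h₍₂₎]` of `H_par` satisfy:
(a) `ε_x[h] = [h₍₂₎]ε_{S⁻¹(h₍₁₎)x}`; (b) `[h]ε_x = ε_{h₍₁₎x}[h₍₂₎]`;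
(c) `ε_{h₍₁₎}ε_{h₍₂₎} = ε_h`; (f) `ε̃_{h₍₁₎}ε̃_{h₍₂₎} = ε̃_h`; (g) `ε̃_h ε_x = ε_x ε̃_h`. -/
theorem Hpar_epsilon_identities (Sinv : H →ₗ[k] H)
    (hSinv₁ : ∀ h : H, Sinv (antipode (R := k) h) = h)
    (hSinv₂ : ∀ h : H, antipode (R := k) (Sinv h) = h) :
    -- (a)
    (∀ (h x : H) (n : ℕ) (h1 h2 : Fin n → H),
      Coalgebra.comul (R := k) h = ∑ i, h1 i ⊗ₜ[k] h2 i →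
      epsilonPar k H x * bracket k H h =
        ∑ i, bracket k H (h2 i) * epsilonPar k H (Sinv (h1 i) * x)) ∧
    -- (b)
    (∀ (h x : H) (n : ℕ) (h1 h2 : Fin n → H),
      Coalgebra.comul (R := k) h = ∑ i, h1 i ⊗ₜ[k] h2 i →
      bracket k H h * epsilonPar k H x =
        ∑ i, epsilonPar k H (h1 i * x) * bracket k H (h2 i)) ∧
    -- (c)
    (∀ (h : H) (n : ℕ) (h1 h2 : Fin n → H),
      Coalgebra.comul (R := k) h = ∑ i, h1 i ⊗ₜ[k] h2 i →
      ∑ i, epsilonPar k H (h1 i) * epsilonPar k H (h2 i) = epsilonPar k H h) ∧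
    -- (f)
    (∀ (h : H) (n : ℕ) (h1 h2 : Fin n → H),
      Coalgebra.comul (R := k) h = ∑ i, h1 i ⊗ₜ[k] h2 i →
      ∑ i, epsilonTildePar k H (h1 i) * epsilonTildePar k H (h2 i) = epsilonTildePar k H h) ∧
    -- (g)
    (∀ h x : H, epsilonTildePar k H h * epsilonPar k H x =
      epsilonPar k H x * epsilonTildePar k H h) := by
  refine ⟨fun h x n h1 h2 hc => ?_, fun h x n h1 h2 hc => ?_, fun h n h1 h2 hc => ?_,
    fun h n h1 h2 hc => ?_, commute_epsilonTildePar_epsilonPar hSinv₁ hSinv₂⟩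
  · exact epsilonPar_mul_bracket_eq_sum hSinv₁ hSinv₂ x ⟨Finset.univ, h1, h2, hc.symm⟩
  · exact bracket_mul_epsilonPar_eq_sum ⟨Finset.univ, h1, h2, hc.symm⟩ x
  · rw [← (⟨Finset.univ, h1, h2, hc.symm⟩ : Repr k h (Fin n)).convMul_apply]
    exact congr($isIdempotentElem_toConv_epsilonPar h)
  · rw [← (⟨Finset.univ, h1, h2, hc.symm⟩ : Repr k h (Fin n)).convMul_apply]
    exact congr($isIdempotentElem_toConv_epsilonTildePar h)
end

section
/- For every partial representation π : H → B of a Hopf algebra H on a unital algebra B, there is a unique algebra morphism π̂ : H_par → B such that π = π̂ ∘ [−]. Conversely, for every algebra morphism φ : H_par → B, the map h ↦ φ([h]) is a partial representation of H on B. -/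
open TensorProduct BigOperators HopfAlgebra

variable (k : Type) [CommRing k] (H : Type) [Ring H] [HopfAlgebra k H]

/-- A partial representation of a Hopf algebra `H` on an algebra `B` (axioms (PR1)-(PR5)),
stated using arbitrary finite Sweedler decompositions of the comultiplication. -/
def IsPartialRep {H : Type} [Ring H] [HopfAlgebra k H]
    {B : Type} [Ring B] [Algebra k B] (π : H →ₗ[k] B) : Prop :=
  π 1 = 1 ∧
  (∀ (h x : H) (n : ℕ) (x1 x2 : Fin n → H),
    Coalgebra.comul (R := k) x = ∑ i, x1 i ⊗ₜ[k] x2 i →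
    π h * ∑ i, π (x1 i) * π (antipode (R := k) (x2 i)) =
      ∑ i, π (h * x1 i) * π (antipode (R := k) (x2 i))) ∧
  (∀ (h x : H) (n : ℕ) (h1 h2 : Fin n → H),
    Coalgebra.comul (R := k) h = ∑ i, h1 i ⊗ₜ[k] h2 i →
    (∑ i, π (h1 i) * π (antipode (R := k) (h2 i))) * π x =
      ∑ i, π (h1 i) * π (antipode (R := k) (h2 i) * x)) ∧
  (∀ (h x : H) (n : ℕ) (x1 x2 : Fin n → H),
    Coalgebra.comul (R := k) x = ∑ i, x1 i ⊗ₜ[k] x2 i →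
    π h * ∑ i, π (antipode (R := k) (x1 i)) * π (x2 i) =
      ∑ i, π (h * antipode (R := k) (x1 i)) * π (x2 i)) ∧
  (∀ (h x : H) (n : ℕ) (h1 h2 : Fin n → H),
    Coalgebra.comul (R := k) h = ∑ i, h1 i ⊗ₜ[k] h2 i →
    (∑ i, π (antipode (R := k) (h1 i)) * π (h2 i)) * π x =
      ∑ i, π (antipode (R := k) (h1 i)) * π (h2 i * x))

/-!
A linear map `π : H → B` extends uniquely to an algebra map `T(H) → B`, and the five families
of relations defining `H_par` are sent by this extension to precisely the two sides of the
axioms (PR1)–(PR5), once the coproducts occurring in them are written as finite sums of pure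
tensors. So `π` is a partial representation exactly when its extension factors through
`H_par`, which is the universal property of the quotient `RingQuot`.
-/

theorem TensorProduct.exists_fin_sum_tmul {R M N : Type} [CommSemiring R] [AddCommMonoid M]
    [AddCommMonoid N] [Module R M] [Module R N] (z : M ⊗[R] N) :
    ∃ (n : ℕ) (a : Fin n → M) (b : Fin n → N), z = ∑ i, a i ⊗ₜ[R] b i := by
  obtain ⟨S, rfl⟩ := TensorProduct.exists_finset z
  refine ⟨S.card, fun i => (S.equivFin.symm i).1.1, fun i => (S.equivFin.symm i).1.2, ?_⟩
  rw [← Finset.sum_coe_sort, ← S.equivFin.symm.sum_comp]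

section

variable {k H} {B : Type} [Ring B] [Algebra k B]

theorem lift_sw_of_comul_eq (π : H →ₗ[k] B) (f g : H →ₗ[k] TensorAlgebra k H) {x : H}
    {n : ℕ} {x1 x2 : Fin n → H} (hx : Coalgebra.comul (R := k) x = ∑ i, x1 i ⊗ₜ[k] x2 i) :
    TensorAlgebra.lift k π (sw k H f g x) =
      ∑ i, TensorAlgebra.lift k π (f (x1 i)) * TensorAlgebra.lift k π (g (x2 i)) := by
  simp [sw, hx, map_sum]

theorem isPartialRep_iff_lift_respects_hparRel (π : H →ₗ[k] B) :
    IsPartialRep k π ↔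
      ∀ a b, HparRel k H a b → TensorAlgebra.lift k π a = TensorAlgebra.lift k π b := by
  constructor
  · rintro ⟨h_one, h_pr2, h_pr3, h_pr4, h_pr5⟩ a b hab
    cases hab with
    | one => simpa using h_one
    | pr2 h x =>
      obtain ⟨n, x1, x2, hx⟩ := TensorProduct.exists_fin_sum_tmul (Coalgebra.comul (R := k) x)
      simpa [lift_sw_of_comul_eq π _ _ hx] using h_pr2 h x n x1 x2 hx
    | pr3 h x =>
      obtain ⟨n, h1, h2, hh⟩ := TensorProduct.exists_fin_sum_tmul (Coalgebra.comul (R := k) h)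
      simpa [lift_sw_of_comul_eq π _ _ hh] using h_pr3 h x n h1 h2 hh
    | pr4 h x =>
      obtain ⟨n, x1, x2, hx⟩ := TensorProduct.exists_fin_sum_tmul (Coalgebra.comul (R := k) x)
      simpa [lift_sw_of_comul_eq π _ _ hx] using h_pr4 h x n x1 x2 hx
    | pr5 h x =>
      obtain ⟨n, h1, h2, hh⟩ := TensorProduct.exists_fin_sum_tmul (Coalgebra.comul (R := k) h)
      simpa [lift_sw_of_comul_eq π _ _ hh] using h_pr5 h x n h1 h2 hh
  · intro hresp
    refine ⟨by simpa using hresp _ _ .one, fun h x n x1 x2 hx => ?_, fun h x n h1 h2 hh => ?_,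
      fun h x n x1 x2 hx => ?_, fun h x n h1 h2 hh => ?_⟩
    · simpa [lift_sw_of_comul_eq π _ _ hx] using hresp _ _ (.pr2 h x)
    · simpa [lift_sw_of_comul_eq π _ _ hh] using hresp _ _ (.pr3 h x)
    · simpa [lift_sw_of_comul_eq π _ _ hx] using hresp _ _ (.pr4 h x)
    · simpa [lift_sw_of_comul_eq π _ _ hh] using hresp _ _ (.pr5 h x)

theorem Hpar.algHom_ext {f g : Hpar k H →ₐ[k] B}
    (hfg : ∀ h, f (bracket k H h) = g (bracket k H h)) : f = g :=
  RingQuot.ringQuot_ext' _ _ _ <| TensorAlgebra.hom_ext <| LinearMap.ext hfg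

end

/-- The universal property of `H_par`: every partial representation
`π : H → B` factors as `π = π̂ ∘ [-]` through a unique algebra morphism
`π̂ : H_par → B`; conversely, for every algebra morphism `φ : H_par → B` the map
`h ↦ φ([h])` is a partial representation of `H` on `B`. -/
theorem Hpar_universal_property {B : Type} [Ring B] [Algebra k B] :
    (∀ π : H →ₗ[k] B, IsPartialRep k π →
      ∃! πhat : Hpar k H →ₐ[k] B, ∀ h : H, πhat (bracket k H h) = π h) ∧
    (∀ φ : Hpar k H →ₐ[k] B, IsPartialRep k (φ.toLinearMap ∘ₗ bracket k H)) := by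
  refine ⟨fun π hπ => ?_, fun φ => ?_⟩
  · have hresp := (isPartialRep_iff_lift_respects_hparRel π).1 hπ
    refine ⟨RingQuot.liftAlgHom k ⟨TensorAlgebra.lift k π, hresp⟩, fun h => ?_,
      fun g hg => Hpar.algHom_ext fun h => ?_⟩
    · simp [bracket]
    · rw [hg h]
      simp [bracket]
  · have hlift : TensorAlgebra.lift k (φ.toLinearMap ∘ₗ bracket k H) =
        φ.comp (RingQuot.mkAlgHom k (HparRel k H)) :=
      TensorAlgebra.hom_ext (by ext; simp [bracket])
    rw [isPartialRep_iff_lift_respects_hparRel, hlift]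
    exact fun a b hab => congrArg φ (RingQuot.mkAlgHom_rel k hab)
end
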